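/- In the erasure-extension setup of the context, the conditional mutual information satisfies I[Ṽ;B|U] = (1 − ε) · I[V;B|U], where both sides are computed on the classical–quantum state ρ_{UVṼB} and its marginals. -/

import Mathlib

open scoped Kronecker ComplexOrder
open Matrix

noncomputable section

/-- Apply a real function to a Hermitian matrix via the spectral decomposition
(returns `0` on non-Hermitian matrices). -/
noncomputable def matCalc {n : Type*} [Fintype n] [DecidableEq n] (f : ℝ → ℝ)
    (M : Matrix n n ℂ) : Matrix n n ℂ :=
  if h : M.IsHermitian then
    (Matrix.IsHermitian.eigenvectorUnitary h : Matrix n n ℂ) *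
      Matrix.diagonal (fun i => (f (h.eigenvalues i) : ℂ)) *
      star (Matrix.IsHermitian.eigenvectorUnitary h : Matrix n n ℂ)
  else 0

/-- Functional-calculus power of a positive semidefinite matrix, taken on the support
(the eigenvalue `0` is sent to `0`). -/
noncomputable def mpow {n : Type*} [Fintype n] [DecidableEq n]
    (M : Matrix n n ℂ) (c : ℝ) : Matrix n n ℂ :=
  matCalc (fun x => if x = 0 then 0 else Real.rpow x c) M

/-- The von Neumann entropy `−Tr[ρ log₂ ρ]` (with the convention `0·log₂0 = 0`). -/
noncomputable def vnEntropy {n : Type*} [Fintype n] [DecidableEq n]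
    (ρ : Matrix n n ℂ) : ℝ :=
  (Matrix.trace (matCalc (fun x => -(x * Real.logb 2 x)) ρ)).re

/-- A density matrix: positive semidefinite with unit trace. -/
def IsDensityMatrix {n : Type*} [Fintype n] (ρ : Matrix n n ℂ) : Prop :=
  ρ.PosSemidef ∧ ρ.trace = 1

/-- A quantum channel: a map admitting a Kraus representation. -/
def IsQChannel {m n : Type*} [Fintype m] [DecidableEq m] [Fintype n]
    (Φ : Matrix m m ℂ → Matrix n n ℂ) : Prop :=
  ∃ (k : ℕ) (K : Fin k → Matrix n m ℂ),
    (∑ i, (K i)ᴴ * K i = 1) ∧ ∀ X, Φ X = ∑ i, K i * X * (K i)ᴴ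

/-- Tensor extension `Φ ⊗ Ψ` of two (linear) maps on matrices. -/
noncomputable def mapTensor {m m' n n' : Type*} [Fintype m] [DecidableEq m]
    [Fintype m'] [Fintype n] [Fintype n']
    (Φ : Matrix m m ℂ → Matrix n n ℂ) (Ψ : Matrix m' m' ℂ → Matrix n' n' ℂ)
    (X : Matrix (m × m') (m × m') ℂ) : Matrix (n × n') (n × n') ℂ :=
  Matrix.of fun p q =>
    ∑ e : m, ∑ g : m,
      Φ (Matrix.single e g 1) p.1 q.1 *
        Ψ (Matrix.of fun f h => X (e, f) (g, h)) p.2 q.2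

/-- `k`-fold tensor power `Φ^{⊗k}` of a (linear) map on matrices. -/
noncomputable def mapTPow {m n : Type*} [Fintype m] [DecidableEq m] [Fintype n]
    (Φ : Matrix m m ℂ → Matrix n n ℂ) (k : ℕ)
    (X : Matrix (Fin k → m) (Fin k → m) ℂ) : Matrix (Fin k → n) (Fin k → n) ℂ :=
  Matrix.of fun x y =>
    ∑ e : Fin k → m, ∑ g : Fin k → m,
      X e g * ∏ i, Φ (Matrix.single (e i) (g i) 1) (x i) (y i)

/-- `k`-fold Kronecker (tensor) power of a matrix. -/
noncomputable def tpow {d : Type*} (ρ : Matrix d d ℂ) (k : ℕ) :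
    Matrix (Fin k → d) (Fin k → d) ℂ :=
  Matrix.of fun x y => ∏ i, ρ (x i) (y i)

/-- Partial trace over the first tensor factor. -/
noncomputable def traceOutFst {a b : Type*} [Fintype a]
    (M : Matrix (a × b) (a × b) ℂ) : Matrix b b ℂ :=
  Matrix.of fun j j' => ∑ i, M (i, j) (i, j')

/-- Partial trace over the second tensor factor. -/
noncomputable def traceOutSnd {a b : Type*} [Fintype b]
    (M : Matrix (a × b) (a × b) ℂ) : Matrix a a ℂ :=
  Matrix.of fun i i' => ∑ j, M (i, j) (i', j)

/-- Quantum mutual information `I[X;Y] = H(ρ_X) + H(ρ_Y) − H(ρ_{XY})` of a bipartite state. -/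
noncomputable def mutInfo {a b : Type*} [Fintype a] [DecidableEq a] [Fintype b] [DecidableEq b]
    (ρ : Matrix (a × b) (a × b) ℂ) : ℝ :=
  vnEntropy (traceOutSnd ρ) + vnEntropy (traceOutFst ρ) - vnEntropy ρ

/-- Fidelity `F(ρ,σ) = Tr √(√σ ρ √σ)`. -/
noncomputable def fidelity {n : Type*} [Fintype n] [DecidableEq n]
    (ρ σ : Matrix n n ℂ) : ℝ :=
  (Matrix.trace (mpow (mpow σ (1/2) * ρ * mpow σ (1/2)) (1/2))).re

/-- Purified distance `P(ρ,σ) = √(1 − F(ρ,σ)²)`. -/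
noncomputable def purifiedDist {n : Type*} [Fintype n] [DecidableEq n]
    (ρ σ : Matrix n n ℂ) : ℝ :=
  Real.sqrt (1 - fidelity ρ σ ^ 2)

/-- Number of distinct eigenvalues (cardinality of the spectrum). -/
noncomputable def nEig {n : Type*} [Fintype n] [DecidableEq n] (M : Matrix n n ℂ) : ℕ :=
  (spectrum ℂ M).ncard

/-- The set of (distinct) eigenvalues of a Hermitian matrix, as a finset. -/
noncomputable def eigSet {n : Type*} [Fintype n] [DecidableEq n] (σ : Matrix n n ℂ) : Finset ℝ :=
  if h : σ.IsHermitian then Finset.univ.image h.eigenvalues else ∅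

/-- Spectral projection of a Hermitian matrix onto the eigenvalue `t`. -/
noncomputable def eigProj {n : Type*} [Fintype n] [DecidableEq n]
    (σ : Matrix n n ℂ) (t : ℝ) : Matrix n n ℂ :=
  matCalc (fun x => if x = t then 1 else 0) σ

/-- The pinching map `E_σ(X) = ∑_j P_j X P_j` with respect to `σ`. -/
noncomputable def pinch {n : Type*} [Fintype n] [DecidableEq n]
    (σ X : Matrix n n ℂ) : Matrix n n ℂ :=
  ∑ t ∈ eigSet σ, eigProj σ t * X * eigProj σ t

/-- The pinching map `id ⊗ E_σ` acting on the second factor of a bipartite system. -/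
noncomputable def pinchSnd {v n : Type*} [Fintype v] [DecidableEq v] [Fintype n] [DecidableEq n]
    (σ : Matrix n n ℂ) (Y : Matrix (v × n) (v × n) ℂ) : Matrix (v × n) (v × n) ℂ :=
  ∑ t ∈ eigSet σ, ((1 : Matrix v v ℂ) ⊗ₖ eigProj σ t) * Y * ((1 : Matrix v v ℂ) ⊗ₖ eigProj σ t)

/-- The projection `{A ≥ B}` onto the nonnegative eigenspaces of `A − B`. -/
noncomputable def projGE {n : Type*} [Fintype n] [DecidableEq n]
    (A B : Matrix n n ℂ) : Matrix n n ℂ :=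
  matCalc (fun x => if 0 ≤ x then 1 else 0) (A - B)

/-- `Q_{1−α}(ρ‖σ) = Tr[(σ^{α/(2(1−α))} ρ σ^{α/(2(1−α))})^{1−α}]`. -/
noncomputable def Qfun {n : Type*} [Fintype n] [DecidableEq n]
    (a : ℝ) (ρ σ : Matrix n n ℂ) : ℝ :=
  (Matrix.trace (mpow (mpow σ (a/(2*(1-a))) * ρ * mpow σ (a/(2*(1-a)))) (1-a))).re

/-- The sandwiched Rényi relative entropy
`D̲_β(ρ‖σ) = (1/(β−1)) log₂ Tr[(σ^{−(β−1)/(2β)} ρ σ^{−(β−1)/(2β)})^β]`. -/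
noncomputable def sRenyi {n : Type*} [Fintype n] [DecidableEq n]
    (b : ℝ) (ρ σ : Matrix n n ℂ) : ℝ :=
  (1/(b-1)) *
    Real.logb 2 ((Matrix.trace (mpow (mpow σ (-(b-1)/(2*b)) * ρ * mpow σ (-(b-1)/(2*b))) b)).re)

/-- The rank-one projector `|u⟩⟨u|`. -/
noncomputable def ketbra {n : Type*} [DecidableEq n] (u : n) : Matrix n n ℂ :=
  Matrix.single u u 1

/-- The classical–quantum state `∑_{u,v} p(u,v) |u⟩⟨u| ⊗ |v⟩⟨v| ⊗ ρ_{B|u,v}`. -/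
noncomputable def cqState {U V B : Type*} [Fintype U] [DecidableEq U]
    [Fintype V] [DecidableEq V] [Fintype B]
    (p : U × V → ℝ) (ρ : U → V → Matrix B B ℂ) :
    Matrix ((U × V) × B) ((U × V) × B) ℂ :=
  ∑ u, ∑ v, (p (u, v) : ℂ) • ((ketbra u ⊗ₖ ketbra v) ⊗ₖ ρ u v)

/-- A generic classical–quantum joint state with labels `lab i` and states `ρ i`. -/
noncomputable def cqJoint {ι X B : Type*} [Fintype ι] [Fintype X] [Fintype B]
    (p : ι → ℝ) (lab : ι → Matrix X X ℂ) (ρ : ι → Matrix B B ℂ) :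
    Matrix (X × B) (X × B) ℂ :=
  ∑ i, (p i : ℂ) • (lab i ⊗ₖ ρ i)

/-- Rényi conditional mutual information `I̲_β[V;B|U]`, given as the infimum over families of
positive definite density matrices `σ_{B|u}`. -/
noncomputable def renyiCondMI {U V B : Type*} [Fintype U] [DecidableEq U]
    [Fintype V] [DecidableEq V] [Fintype B] [DecidableEq B]
    (b : ℝ) (p : U × V → ℝ) (ρ : U → V → Matrix B B ℂ) : ℝ :=
  sInf { r | ∃ σ : U → Matrix B B ℂ,
    (∀ u, (σ u).PosDef ∧ (σ u).trace = 1) ∧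
    r = sRenyi b (cqState p ρ) (cqState p (fun u _ => σ u)) }

/-- The state of the erasure register: `(1−ε)|v⟩⟨v| + ε|e⟩⟨e|` (the erasure symbol is `none`). -/
noncomputable def erasureKet {V : Type*} [Fintype V] [DecidableEq V] (ε : ℝ) (v : V) :
    Matrix (Option V) (Option V) ℂ :=
  ((1 - ε : ℝ) : ℂ) • ketbra (Option.some v) + (ε : ℂ) • ketbra (Option.none)


/-!
Each of the three states is classical on its first register, `∑ₓ |x⟩⟨x| ⊗ σₓ`, hence block
diagonal, and then `I[X;B] = H(∑ₓ σₓ) − ∑ₓ (H(σₓ) − η(Tr σₓ))` with `η(t) = −t log₂ t`. The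
summand `H(σ) − η(Tr σ)` is homogeneous of degree one in `σ`, since `η(ct) = c η(t) + t η(c)`.
Erasing `V` keeps the `B`-marginal and replaces each block `p(u,v) ρ_{u,v}` by the block
`(1 − ε) p(u,v) ρ_{u,v}` labelled `(u, v)` and a share of the erasure block
`ε ∑_v p(u,v) ρ_{u,v}` labelled `(u, e)`; by homogeneity the conditional part of `I[UṼ;B]` is
`(1 − ε)` times that of `I[UV;B]` plus `ε` times that of `I[U;B]`.
-/

namespace Matrix.IsHermitian

theorem ofReal_smul {n : Type*} {A : Matrix n n ℂ} (hA : A.IsHermitian) (c : ℝ) :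
    ((c : ℂ) • A).IsHermitian :=
  hA.smul (Complex.conj_ofReal c)

theorem ofReal_re_trace {n : Type*} [Fintype n] {A : Matrix n n ℂ} (hA : A.IsHermitian) :
    (A.trace.re : ℂ) = A.trace :=
  Complex.conj_eq_iff_re.mp (by rw [← Complex.star_def, ← trace_conjTranspose, hA.eq])

variable {n : Type*} [Fintype n] [DecidableEq n] {A : Matrix n n ℂ}

theorem exists_eq_conj_diagonal (hA : A.IsHermitian) :
    ∃ U : Matrix n n ℂ, star U * U = 1 ∧
      ∃ d : n → ℝ, A = U * diagonal (fun i => (d i : ℂ)) * star U := by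
  refine ⟨_, Unitary.coe_star_mul_self hA.eigenvectorUnitary, hA.eigenvalues, ?_⟩
  conv_lhs => rw [hA.spectral_theorem, Unitary.conjStarAlgAut_apply]
  rfl

theorem trace_matCalc (hA : A.IsHermitian) (f : ℝ → ℝ) :
    (matCalc f A).trace = ∑ i, (f (hA.eigenvalues i) : ℂ) := by
  rw [matCalc, dif_pos hA, trace_mul_cycle, Unitary.coe_star_mul_self, Matrix.one_mul,
    trace_diagonal]

theorem sum_comp_eigenvalues_of_eq_conj_diagonal (hA : A.IsHermitian) {U : Matrix n n ℂ}
    (hU : star U * U = 1) {d : n → ℝ} (hAd : A = U * diagonal (fun i => (d i : ℂ)) * star U)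
    (f : ℝ → ℝ) : ∑ i, f (hA.eigenvalues i) = ∑ i, f (d i) := by
  have hchar : A.charpoly = ∏ i, (Polynomial.X - Polynomial.C (d i : ℂ)) := by
    rw [hAd, charpoly_mul_comm, ← Matrix.mul_assoc, hU, Matrix.one_mul, charpoly_diagonal]
  have hroots : Multiset.map (fun i => (hA.eigenvalues i : ℂ)) Finset.univ.val =
      Multiset.map (fun i => (d i : ℂ)) Finset.univ.val := by
    have h := hA.roots_charpoly_eq_eigenvalues
    rw [hchar, Polynomial.roots_prod _ _
      (Finset.prod_ne_zero_iff.mpr fun i _ => Polynomial.X_sub_C_ne_zero _)] at h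
    simpa [Function.comp_def] using h.symm
  simpa [Multiset.map_map, Function.comp_def] using
    congrArg (fun s => (s.map (f ∘ Complex.re)).sum) hroots

end Matrix.IsHermitian

theorem Matrix.isHermitian_conj_diagonal_ofReal {n : Type*} [Fintype n] [DecidableEq n]
    (U : Matrix n n ℂ) (d : n → ℝ) : (U * diagonal (fun i => (d i : ℂ)) * star U).IsHermitian :=
  isHermitian_mul_mul_conjTranspose U (isHermitian_diagonal_iff.mpr fun _ => Complex.conj_ofReal _)

def negMulLog₂ (x : ℝ) : ℝ := -(x * Real.logb 2 x)

theorem negMulLog₂_mul (x y : ℝ) : negMulLog₂ (x * y) = y * negMulLog₂ x + x * negMulLog₂ y := by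
  have h (z : ℝ) : negMulLog₂ z = Real.negMulLog z / Real.log 2 := by
    simp only [negMulLog₂, Real.negMulLog, Real.logb]
    ring
  rw [h, h, h, Real.negMulLog_mul]
  ring

section vnEntropy

variable {m n : Type*} [Fintype m] [DecidableEq m] [Fintype n] [DecidableEq n]

theorem vnEntropy_conj_diagonal {U : Matrix n n ℂ} (hU : star U * U = 1) (d : n → ℝ) :
    vnEntropy (U * diagonal (fun i => (d i : ℂ)) * star U) = ∑ i, negMulLog₂ (d i) := by
  have hA := isHermitian_conj_diagonal_ofReal U d
  rw [vnEntropy, hA.trace_matCalc, ← Complex.ofReal_sum, Complex.ofReal_re]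
  exact hA.sum_comp_eigenvalues_of_eq_conj_diagonal hU rfl negMulLog₂

theorem vnEntropy_diagonal (d : n → ℝ) :
    vnEntropy (diagonal (fun i => (d i : ℂ))) = ∑ i, negMulLog₂ (d i) := by
  simpa using vnEntropy_conj_diagonal (U := 1) (by simp) d

theorem vnEntropy_reindex {A : Matrix m m ℂ} (hA : A.IsHermitian) (e : m ≃ n) :
    vnEntropy (reindex e e A) = vnEntropy A := by
  obtain ⟨U, hU, d, rfl⟩ := hA.exists_eq_conj_diagonal
  set Ue := U.submatrix e.symm e.symm
  have hstar : (star U).submatrix e.symm e.symm = star Ue := (conjTranspose_submatrix U _ _).symm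
  have hUe : star Ue * Ue = 1 := by
    rw [← hstar, submatrix_mul_equiv, hU, submatrix_one_equiv]
  rw [reindex_apply, ← submatrix_mul_equiv _ _ _ e.symm, ← submatrix_mul_equiv _ _ _ e.symm,
    submatrix_diagonal_equiv, hstar]
  refine (vnEntropy_conj_diagonal hUe (d ∘ e.symm)).trans ?_
  rw [vnEntropy_conj_diagonal hU]
  exact Equiv.sum_comp e.symm (fun i => negMulLog₂ (d i))

theorem vnEntropy_blockDiagonal {X : Type*} [Fintype X] [DecidableEq X]
    {σ : X → Matrix n n ℂ} (hσ : ∀ x, (σ x).IsHermitian) :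
    vnEntropy (blockDiagonal σ) = ∑ x, vnEntropy (σ x) := by
  choose U hU d hd using fun x => (hσ x).exists_eq_conj_diagonal
  have hUX : star (blockDiagonal U) * blockDiagonal U = 1 := by
    rw [star_eq_conjTranspose, blockDiagonal_conjTranspose, ← blockDiagonal_mul]
    simp only [← star_eq_conjTranspose, hU]
    exact blockDiagonal_one
  have hσX : blockDiagonal σ = blockDiagonal U *
      diagonal (fun i : n × X => (d i.2 i.1 : ℂ)) * star (blockDiagonal U) := by
    rw [← blockDiagonal_diagonal (fun x i => (d x i : ℂ)), star_eq_conjTranspose,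
      blockDiagonal_conjTranspose, ← blockDiagonal_mul, ← blockDiagonal_mul]
    exact congrArg blockDiagonal (funext hd)
  rw [hσX, vnEntropy_conj_diagonal hUX, Fintype.sum_prod_type_right]
  exact Finset.sum_congr rfl fun x _ => by rw [hd x, vnEntropy_conj_diagonal (hU x)]

theorem vnEntropy_real_smul {A : Matrix n n ℂ} (hA : A.IsHermitian) (c : ℝ) :
    vnEntropy ((c : ℂ) • A) = c * vnEntropy A + negMulLog₂ c * A.trace.re := by
  obtain ⟨U, hU, d, rfl⟩ := hA.exists_eq_conj_diagonal
  have hcA : (c : ℂ) • (U * diagonal (fun i => (d i : ℂ)) * star U) =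
      U * diagonal (fun i => ((c * d i : ℝ) : ℂ)) * star U := by
    have hcd : (fun i => ((c * d i : ℝ) : ℂ)) = (c : ℂ) • fun i => (d i : ℂ) := by
      ext i
      simp
    rw [hcd, diagonal_smul, mul_smul_comm, smul_mul_assoc]
  have htr : (U * diagonal (fun i => (d i : ℂ)) * star U).trace.re = ∑ i, d i := by
    rw [trace_mul_cycle, hU, Matrix.one_mul, trace_diagonal, ← Complex.ofReal_sum,
      Complex.ofReal_re]
  simp_rw [hcA, htr, vnEntropy_conj_diagonal hU, negMulLog₂_mul, Finset.mul_sum,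
    ← Finset.sum_add_distrib]
  exact Finset.sum_congr rfl fun i _ => by ring

/-- For `A = t • ρ` with `ρ` a density matrix this is `t * H(ρ)`, the contribution of one
classical value `x` to the conditional entropy `H(B|X)` of a classical–quantum state. -/
def weightedEntropy (A : Matrix n n ℂ) : ℝ :=
  vnEntropy A - negMulLog₂ A.trace.re

theorem weightedEntropy_real_smul {A : Matrix n n ℂ} (hA : A.IsHermitian) (c : ℝ) :
    weightedEntropy ((c : ℂ) • A) = c * weightedEntropy A := by
  rw [weightedEntropy, weightedEntropy, vnEntropy_real_smul hA, trace_smul, smul_eq_mul,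
    Complex.re_ofReal_mul, negMulLog₂_mul]
  ring

end vnEntropy

theorem kronecker_sum {ι C B : Type*} (A : Matrix C C ℂ) (s : Finset ι)
    (f : ι → Matrix B B ℂ) : A ⊗ₖ (∑ i ∈ s, f i) = ∑ i ∈ s, A ⊗ₖ f i := by
  ext
  simp [Matrix.sum_apply, Finset.mul_sum]

theorem ketbra_kronecker_ketbra {X Y : Type*} [DecidableEq X] [DecidableEq Y] (x : X) (y : Y) :
    (ketbra x ⊗ₖ ketbra y : Matrix (X × Y) (X × Y) ℂ) = ketbra (x, y) := by
  rw [ketbra, ketbra, single_kronecker_single, mul_one, ketbra]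

theorem ketbra_kronecker_erasureKet {X Y : Type*} [DecidableEq X] [Fintype Y] [DecidableEq Y]
    (ε : ℝ) (x : X) (y : Y) :
    ketbra x ⊗ₖ erasureKet ε y =
      ((1 - ε : ℝ) : ℂ) • ketbra (x, some y) + (ε : ℂ) • ketbra (x, (none : Option Y)) := by
  rw [erasureKet, kronecker_add, kronecker_smul, kronecker_smul, ketbra_kronecker_ketbra,
    ketbra_kronecker_ketbra]

section ClassicalQuantum

variable {X B : Type*} [Fintype X] [DecidableEq X]

theorem sum_ketbra_kronecker (σ : X → Matrix B B ℂ) :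
    ∑ x, ketbra x ⊗ₖ σ x =
      reindex (Equiv.prodComm B X) (Equiv.prodComm B X) (blockDiagonal σ) := by
  ext ⟨x, b⟩ ⟨y, c⟩
  simp [Matrix.sum_apply, ketbra, single_apply, blockDiagonal_apply, ite_and]

theorem traceOutSnd_sum_ketbra_kronecker [Fintype B] (σ : X → Matrix B B ℂ) :
    traceOutSnd (∑ x, ketbra x ⊗ₖ σ x) = diagonal fun x => (σ x).trace := by
  ext x y
  simp [traceOutSnd, Matrix.sum_apply, ketbra, single_apply, diagonal_apply, trace, ite_and]

theorem traceOutFst_sum_ketbra_kronecker (σ : X → Matrix B B ℂ) :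
    traceOutFst (∑ x, ketbra x ⊗ₖ σ x) = ∑ x, σ x := by
  ext b c
  simp [traceOutFst, Matrix.sum_apply, ketbra, single_apply]

theorem mutInfo_sum_ketbra_kronecker [Fintype B] [DecidableEq B] {σ : X → Matrix B B ℂ}
    (hσ : ∀ x, (σ x).IsHermitian) :
    mutInfo (∑ x, ketbra x ⊗ₖ σ x) = vnEntropy (∑ x, σ x) - ∑ x, weightedEntropy (σ x) := by
  have htr : (fun x => (σ x).trace) = fun x => ((σ x).trace.re : ℂ) :=
    funext fun x => (hσ x).ofReal_re_trace.symm
  rw [mutInfo, traceOutSnd_sum_ketbra_kronecker, traceOutFst_sum_ketbra_kronecker, htr,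
    vnEntropy_diagonal, sum_ketbra_kronecker,
    vnEntropy_reindex (isHermitian_blockDiagonal_iff.mpr hσ), vnEntropy_blockDiagonal hσ]
  simp only [weightedEntropy, Finset.sum_sub_distrib]
  ring

end ClassicalQuantum

section Erasure

variable {X Y B : Type*} [Fintype X] [Fintype Y]

/-- The blocks of the classical–quantum state obtained from `∑_{x,y} |x,y⟩⟨x,y| ⊗ σ_{x,y}` by
sending `Y` through an erasure channel; `none` is the erasure symbol. -/
def erasedBlocks (ε : ℝ) (σ : X → Y → Matrix B B ℂ) : X × Option Y → Matrix B B ℂ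
  | (x, none) => (ε : ℂ) • ∑ y, σ x y
  | (x, some y) => ((1 - ε : ℝ) : ℂ) • σ x y

theorem sum_erasedBlocks (ε : ℝ) (σ : X → Y → Matrix B B ℂ) :
    ∑ z, erasedBlocks ε σ z = ∑ x, ∑ y, σ x y := by
  rw [Fintype.sum_prod_type]
  refine Finset.sum_congr rfl fun x _ => ?_
  simp only [Fintype.sum_option, erasedBlocks, ← Finset.smul_sum, ← add_smul]
  rw [Complex.ofReal_sub, Complex.ofReal_one, add_sub_cancel, one_smul]

theorem sum_weightedEntropy_erasedBlocks [Fintype B] [DecidableEq B] {σ : X → Y → Matrix B B ℂ}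
    (hσ : ∀ x y, (σ x y).IsHermitian) (ε : ℝ) :
    ∑ z, weightedEntropy (erasedBlocks ε σ z) =
      ∑ x, (ε * weightedEntropy (∑ y, σ x y) + (1 - ε) * ∑ y, weightedEntropy (σ x y)) := by
  rw [Fintype.sum_prod_type]
  refine Finset.sum_congr rfl fun x _ => ?_
  simp only [Fintype.sum_option, erasedBlocks, Finset.mul_sum,
    weightedEntropy_real_smul (isSelfAdjoint_sum _ fun y _ => hσ x y),
    weightedEntropy_real_smul (hσ x _)]

variable [DecidableEq X] [DecidableEq Y]

theorem sum_ketbra_kronecker_erasedBlocks (ε : ℝ) (σ : X → Y → Matrix B B ℂ) :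
    ∑ z, ketbra z ⊗ₖ erasedBlocks ε σ z = ∑ x, ∑ y, (ketbra x ⊗ₖ erasureKet ε y) ⊗ₖ σ x y := by
  rw [Fintype.sum_prod_type]
  refine Finset.sum_congr rfl fun x _ => ?_
  simp only [Fintype.sum_option, erasedBlocks, ketbra_kronecker_erasureKet, add_kronecker,
    smul_kronecker, kronecker_smul, kronecker_sum, Finset.smul_sum, Finset.sum_add_distrib]
  rw [add_comm]

variable [Fintype B] [DecidableEq B]

theorem mutInfo_erasedBlocks_sub {σ : X → Y → Matrix B B ℂ}
    (hσ : ∀ x y, (σ x y).IsHermitian) (ε : ℝ) :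
    mutInfo (∑ z, ketbra z ⊗ₖ erasedBlocks ε σ z) - mutInfo (∑ x, ketbra x ⊗ₖ ∑ y, σ x y) =
      (1 - ε) * (mutInfo (∑ z : X × Y, ketbra z ⊗ₖ σ z.1 z.2) -
        mutInfo (∑ x, ketbra x ⊗ₖ ∑ y, σ x y)) := by
  have hsum x : (∑ y, σ x y).IsHermitian := isSelfAdjoint_sum _ fun y _ => hσ x y
  have herased : ∀ z, (erasedBlocks ε σ z).IsHermitian := by
    rintro ⟨x, _ | y⟩
    · exact (hsum x).ofReal_smul ε
    · exact (hσ x y).ofReal_smul (1 - ε)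
  rw [mutInfo_sum_ketbra_kronecker herased, mutInfo_sum_ketbra_kronecker hsum,
    mutInfo_sum_ketbra_kronecker (σ := fun z : X × Y => σ z.1 z.2) fun z => hσ z.1 z.2,
    sum_erasedBlocks, sum_weightedEntropy_erasedBlocks hσ, Fintype.sum_prod_type,
    Fintype.sum_prod_type]
  simp only [Finset.sum_add_distrib, ← Finset.mul_sum]
  ring

end Erasure

theorem erasure_cond_mutual_info_general {dU dV dB : ℕ}
    (p : Fin dU × Fin dV → ℝ)
    (ρB : Fin dU → Fin dV → Matrix (Fin dB) (Fin dB) ℂ)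
    (hρB : ∀ u v, IsDensityMatrix (ρB u v))
    (ε : ℝ) :
    mutInfo (∑ u, ∑ v, (p (u, v) : ℂ) • ((ketbra u ⊗ₖ erasureKet ε v) ⊗ₖ ρB u v)) -
        mutInfo (∑ u, ∑ v, (p (u, v) : ℂ) • (ketbra u ⊗ₖ ρB u v)) =
      (1 - ε) *
        (mutInfo (∑ u, ∑ v, (p (u, v) : ℂ) • ((ketbra u ⊗ₖ ketbra v) ⊗ₖ ρB u v)) -
          mutInfo (∑ u, ∑ v, (p (u, v) : ℂ) • (ketbra u ⊗ₖ ρB u v))) := by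
  set σ : Fin dU → Fin dV → Matrix (Fin dB) (Fin dB) ℂ := fun u v => (p (u, v) : ℂ) • ρB u v
  have hσ u v : (σ u v).IsHermitian := (hρB u v).1.isHermitian.ofReal_smul (p (u, v))
  have hUB : ∑ u, ∑ v, (p (u, v) : ℂ) • (ketbra u ⊗ₖ ρB u v) = ∑ u, ketbra u ⊗ₖ ∑ v, σ u v := by
    simp only [σ, kronecker_sum, kronecker_smul]
  have hUVB : ∑ u, ∑ v, (p (u, v) : ℂ) • ((ketbra u ⊗ₖ ketbra v) ⊗ₖ ρB u v) =
      ∑ z : Fin dU × Fin dV, ketbra z ⊗ₖ σ z.1 z.2 := by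
    simp only [σ, Fintype.sum_prod_type, ketbra_kronecker_ketbra, kronecker_smul]
  have hUVeB : ∑ u, ∑ v, (p (u, v) : ℂ) • ((ketbra u ⊗ₖ erasureKet ε v) ⊗ₖ ρB u v) =
      ∑ z, ketbra z ⊗ₖ erasedBlocks ε σ z := by
    simp only [σ, sum_ketbra_kronecker_erasedBlocks, kronecker_smul]
  rw [hUB, hUVB, hUVeB, mutInfo_erasedBlocks_sub hσ]

/-- In the erasure-extension setup, `I[Ṽ;B|U] = (1−ε)·I[V;B|U]`. -/
theorem erasure_cond_mutual_info {dU dV dB : ℕ}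
    (p : Fin dU × Fin dV → ℝ) (hp : ∀ x, 0 ≤ p x) (hp1 : ∑ x, p x = 1)
    (ρB : Fin dU → Fin dV → Matrix (Fin dB) (Fin dB) ℂ)
    (hρB : ∀ u v, IsDensityMatrix (ρB u v))
    (ε : ℝ) (hε : ε ∈ Set.Icc (0 : ℝ) 1) :
    mutInfo (∑ u, ∑ v, (p (u, v) : ℂ) • ((ketbra u ⊗ₖ erasureKet ε v) ⊗ₖ ρB u v)) -
        mutInfo (∑ u, ∑ v, (p (u, v) : ℂ) • (ketbra u ⊗ₖ ρB u v)) =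
      (1 - ε) *
        (mutInfo (∑ u, ∑ v, (p (u, v) : ℂ) • ((ketbra u ⊗ₖ ketbra v) ⊗ₖ ρB u v)) -
          mutInfo (∑ u, ∑ v, (p (u, v) : ℂ) • (ketbra u ⊗ₖ ρB u v))) :=
  erasure_cond_mutual_info_general p ρB hρB ε

end
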